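/- arXiv:0901.0695 — 2 statements merged into one kernel-verified Lean document; each statement's English description precedes it below -/
import Mathlib

section
/- Let (X,d) be a finite metric space with cardinality n = |X| ≥ 3 whose metric is not a positive multiple of the discrete metric (equivalently, 𝔇_X > 1), and let p ≥ 0. If the p-negative type gap Γ_X^p of (X,d) is positive, then, setting ζ = ln(1 + Γ_X^p/((diam X)^p · γ(n)))/ln 𝔇_X, the space (X,d) has q-negative type for all q ∈ [p, p+ζ] and strict q-negative type for all q ∈ [p, p+ζ). -/
/-!
Writing `η = α • (m - n)`, with `m` and `n` the normalized positive and negative parts of `η`,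
turns the negative type quadratic form into `-2α²` times the gap of a normalized simplex, so
(strict) `q`-negative type follows from nonnegativity (positivity) of all `q`-simplex gaps.
Raising the exponent from `p` to `p + ε` multiplies the cross distances by at least `δ ^ ε` and
the within distances by at most `Δ ^ ε` (`δ` the minimal distance, `Δ` the diameter), and by
Cauchy–Schwarz the within sums are at most `Δ ^ p * γ(n)`. Hence every `(p + ε)`-gap is at least
`δ ^ ε * (Γ - (𝔇 ^ ε - 1) * Δ ^ p * γ(n))`, which is `≥ 0` for `ε ≤ ζ` and `> 0` for `ε < ζ`.
-/

open scoped BigOperators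

/-- The kernel `d(x,y)^p`, with the convention that it vanishes on the diagonal
(this matters only when `p = 0`). -/
noncomputable def negKer {X : Type*} [MetricSpace X] (p : ℝ) (x y : X) : ℝ :=
  @ite ℝ (x = y) (Classical.dec _) 0 (dist x y ^ p)

/-- `(X,d)` has `p`-negative type: for all `k ≥ 2`, pairwise distinct points
`x₁,…,x_k` and reals `η₁,…,η_k` summing to zero,
`∑_{i,j} d(xᵢ,xⱼ)^p ηᵢ ηⱼ ≤ 0`. -/
def HasNegType (X : Type*) [MetricSpace X] (p : ℝ) : Prop :=
  ∀ (k : ℕ), 2 ≤ k → ∀ (x : Fin k → X), Function.Injective x →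
    ∀ (η : Fin k → ℝ), (∑ i, η i) = 0 →
      (∑ i, ∑ j, negKer p (x i) (x j) * η i * η j) ≤ 0

/-- `(X,d)` has strict `p`-negative type: `p`-negative type, with strict
inequality whenever `η ≠ 0`. -/
def HasStrictNegType (X : Type*) [MetricSpace X] (p : ℝ) : Prop :=
  HasNegType X p ∧
  ∀ (k : ℕ), 2 ≤ k → ∀ (x : Fin k → X), Function.Injective x →
    ∀ (η : Fin k → ℝ), (∑ i, η i) = 0 → η ≠ 0 →
      (∑ i, ∑ j, negKer p (x i) (x j) * η i * η j) < 0

/-- A normalized `(s,t)`-simplex in `X`: `s+t` pairwise distinct points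
`a₁,…,a_s,b₁,…,b_t` with positive weights `m`, `n`, each family summing to `1`. -/
structure IsNormSimplex {X : Type*} [MetricSpace X] {s t : ℕ}
    (a : Fin s → X) (b : Fin t → X) (m : Fin s → ℝ) (n : Fin t → ℝ) : Prop where
  inj_a : Function.Injective a
  inj_b : Function.Injective b
  disj : ∀ j i, a j ≠ b i
  m_pos : ∀ j, 0 < m j
  n_pos : ∀ i, 0 < n i
  m_sum : (∑ j, m j) = 1
  n_sum : (∑ i, n i) = 1

/-- The `p`-negative type simplex gap `γ_D^p(ω)` of a loaded `(s,t)`-simplex. -/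
noncomputable def simplexGap {X : Type*} [MetricSpace X] (p : ℝ) {s t : ℕ}
    (a : Fin s → X) (b : Fin t → X) (m : Fin s → ℝ) (n : Fin t → ℝ) : ℝ :=
  (∑ j, ∑ i, m j * n i * dist (a j) (b i) ^ p)
    - (∑ j₁, ∑ j₂, if j₁ < j₂ then m j₁ * m j₂ * dist (a j₁) (a j₂) ^ p else 0)
    - (∑ i₁, ∑ i₂, if i₁ < i₂ then n i₁ * n i₂ * dist (b i₁) (b i₂) ^ p else 0)

/-- `γ(m) = 1 - (1/2)(1/⌊m/2⌋ + 1/⌈m/2⌉)`. -/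
noncomputable def gammaFn (m : ℕ) : ℝ :=
  1 - (1 / 2) * ((1 : ℝ) / ((m / 2 : ℕ) : ℝ) + (1 : ℝ) / (((m + 1) / 2 : ℕ) : ℝ))

/-- The (normalized) `p`-negative type gap `Γ_X^p` of `(X,d)`: the infimum of
the simplex gaps over all normalized `(s,t)`-simplices in `X`. -/
noncomputable def negTypeGap (X : Type*) [MetricSpace X] (p : ℝ) : ℝ :=
  sInf {g : ℝ | ∃ (s t : ℕ) (a : Fin s → X) (b : Fin t → X)
    (m : Fin s → ℝ) (n : Fin t → ℝ),
      IsNormSimplex a b m n ∧ g = simplexGap p a b m n}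

/-- The minimal distance between distinct points of `X`. -/
noncomputable def minSep (X : Type*) [MetricSpace X] : ℝ :=
  sInf {r : ℝ | ∃ x y : X, x ≠ y ∧ r = dist x y}

/-- The scaled metric diameter `𝔇_X = diam X / min{d(x,y) : x ≠ y}`. -/
noncomputable def scaledDiam (X : Type*) [MetricSpace X] : ℝ :=
  Metric.diam (Set.univ : Set X) / minSep X

open Finset Function Real

theorem two_mul_sum_sum_ite_lt {ι : Type*} [Fintype ι] [LinearOrder ι] {f : ι → ι → ℝ}
    (hf : ∀ i j, f i j = f j i) :
    2 * ∑ i, ∑ j, (if i < j then f i j else 0) = ∑ i, ∑ j, f i j - ∑ i, f i i := by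
  have hsplit : ∀ i j, f i j = (if i < j then f i j else 0) + (if j < i then f j i else 0)
      + (if i = j then f i j else 0) := by
    intro i j
    rcases lt_trichotomy i j with h | rfl | h
    · simp [h, h.not_gt, h.ne]
    · simp
    · simp [h, h.not_gt, h.ne', hf i j]
  have hswap : ∑ i, ∑ j, (if j < i then f j i else 0)
      = ∑ i, ∑ j, (if i < j then f i j else 0) := sum_comm
  simp_rw [sum_congr rfl fun i _ => sum_congr rfl fun j _ => hsplit i j, sum_add_distrib, hswap]
  simp only [sum_ite_eq, mem_univ, ↓reduceIte, add_sub_cancel_right]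
  ring

/-- `a * b - s * (N - s) = (s - a) * (s - b)` for `a = N / 2`, `b = (N + 1) / 2`, and no integer
lies strictly between `a` and `b`. -/
theorem mul_sub_le_div_two_mul_succ_div_two (s N : ℕ) :
    (s : ℝ) * (N - s) ≤ (N / 2 : ℕ) * ((N + 1) / 2 : ℕ) := by
  have hab : ((N / 2 : ℕ) : ℝ) + ((N + 1) / 2 : ℕ) = N := by exact_mod_cast (by omega)
  have hba : (((N + 1) / 2 : ℕ) : ℝ) ≤ (N / 2 : ℕ) + 1 := by exact_mod_cast (by omega)
  have hab' : ((N / 2 : ℕ) : ℝ) ≤ ((N + 1) / 2 : ℕ) := by exact_mod_cast (by omega)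
  rcases le_or_gt s (N / 2) with h | h
  · have h' : (s : ℝ) ≤ (N / 2 : ℕ) := by exact_mod_cast h
    nlinarith [mul_nonneg (sub_nonneg.2 h') (sub_nonneg.2 (h'.trans hab'))]
  · have h' : ((N / 2 : ℕ) : ℝ) + 1 ≤ s := by exact_mod_cast h
    nlinarith [mul_nonneg (by linarith : (0 : ℝ) ≤ s - (N / 2 : ℕ))
      (by linarith : (0 : ℝ) ≤ s - ((N + 1) / 2 : ℕ))]

theorem le_gammaFn_of_add_le {s t N : ℕ} (hs : 1 ≤ s) (ht : 1 ≤ t) (h : s + t ≤ N) :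
    1 - 1 / 2 * (1 / (s : ℝ) + 1 / t) ≤ gammaFn N := by
  have ha : (0 : ℝ) < (N / 2 : ℕ) := by exact_mod_cast (by omega)
  have hb : (0 : ℝ) < ((N + 1) / 2 : ℕ) := by exact_mod_cast (by omega)
  have hab : ((N / 2 : ℕ) : ℝ) + ((N + 1) / 2 : ℕ) = N := by exact_mod_cast (by omega)
  have hs' : (0 : ℝ) < s := by exact_mod_cast hs
  have hst : (t : ℝ) ≤ N - s := by
    rw [le_sub_iff_add_le']; exact_mod_cast h
  have ht' : (0 : ℝ) < t := by exact_mod_cast ht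
  have hinv : 1 / ((N / 2 : ℕ) : ℝ) + 1 / ((N + 1) / 2 : ℕ) ≤ 1 / s + 1 / t :=
    calc 1 / ((N / 2 : ℕ) : ℝ) + 1 / ((N + 1) / 2 : ℕ)
        = N / ((N / 2 : ℕ) * ((N + 1) / 2 : ℕ)) := by field_simp; linarith
      _ ≤ N / (s * (N - s)) :=
          div_le_div_of_nonneg_left (by positivity) (by nlinarith)
            (mul_sub_le_div_two_mul_succ_div_two s N)
      _ = 1 / s + 1 / (N - s) := by field_simp [(by linarith : (N : ℝ) - s ≠ 0)]; ring
      _ ≤ 1 / s + 1 / t := by gcongr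
  unfold gammaFn
  linarith

theorem gammaFn_pos {N : ℕ} (hN : 3 ≤ N) : 0 < gammaFn N := by
  have := le_gammaFn_of_add_le (le_refl 1) (by norm_num : 1 ≤ 2) hN
  norm_num at this
  linarith

section Metric

variable {X : Type*} [MetricSpace X]

theorem negKer_self (q : ℝ) (x : X) : negKer q x x = 0 := if_pos rfl

theorem negKer_of_ne (q : ℝ) {x y : X} (h : x ≠ y) : negKer q x y = dist x y ^ q := if_neg h

theorem negKer_comm (q : ℝ) (x y : X) : negKer q x y = negKer q y x := by
  by_cases h : x = y
  · rw [h]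
  · rw [negKer_of_ne q h, negKer_of_ne q (Ne.symm h), dist_comm]

theorem minSep_le_dist {x y : X} (h : x ≠ y) : minSep X ≤ dist x y :=
  csInf_le ⟨0, by rintro _ ⟨x, y, -, rfl⟩; exact dist_nonneg⟩ ⟨x, y, h, rfl⟩

theorem minSep_pos [Finite X] {x y : X} (h : x ≠ y) : 0 < minSep X := by
  have hfin : {r : ℝ | ∃ x y : X, x ≠ y ∧ r = dist x y}.Finite :=
    (Set.finite_range fun z : X × X => dist z.1 z.2).subset
      (by rintro _ ⟨x, y, -, rfl⟩; exact ⟨(x, y), rfl⟩)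
  obtain ⟨x', y', h', hr⟩ := Set.Nonempty.csInf_mem (by exact ⟨_, x, y, h, rfl⟩) hfin
  rw [minSep, hr]
  exact dist_pos.2 h'

theorem dist_le_diam_univ [Finite X] (x y : X) : dist x y ≤ Metric.diam (Set.univ : Set X) :=
  Metric.dist_le_diam_of_mem Set.finite_univ.isBounded (Set.mem_univ x) (Set.mem_univ y)

noncomputable def withinSum {s : ℕ} (f : ℝ → ℝ) (a : Fin s → X) (m : Fin s → ℝ) : ℝ :=
  ∑ j₁, ∑ j₂, if j₁ < j₂ then m j₁ * m j₂ * f (dist (a j₁) (a j₂)) else 0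

noncomputable def crossSum {s t : ℕ} (f : ℝ → ℝ) (a : Fin s → X) (b : Fin t → X)
    (m : Fin s → ℝ) (n : Fin t → ℝ) : ℝ :=
  ∑ j, ∑ i, m j * n i * f (dist (a j) (b i))

section Sums

variable {s t : ℕ} {a : Fin s → X} {b : Fin t → X} {m : Fin s → ℝ} {n : Fin t → ℝ}

theorem simplexGap_eq (p : ℝ) : simplexGap p a b m n
    = crossSum (· ^ p) a b m n - withinSum (· ^ p) a m - withinSum (· ^ p) b n := rfl

theorem withinSum_le_mul {f g : ℝ → ℝ} {c : ℝ} (hm : ∀ j, 0 ≤ m j)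
    (h : ∀ j₁ j₂, j₁ < j₂ → f (dist (a j₁) (a j₂)) ≤ c * g (dist (a j₁) (a j₂))) :
    withinSum f a m ≤ c * withinSum g a m := by
  rw [withinSum, withinSum, mul_sum]
  refine sum_le_sum fun j₁ _ => ?_
  rw [mul_sum]
  refine sum_le_sum fun j₂ _ => ?_
  split_ifs with h₁₂
  · calc m j₁ * m j₂ * f (dist (a j₁) (a j₂))
        ≤ m j₁ * m j₂ * (c * g (dist (a j₁) (a j₂))) :=
          mul_le_mul_of_nonneg_left (h j₁ j₂ h₁₂) (mul_nonneg (hm j₁) (hm j₂))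
      _ = c * (m j₁ * m j₂ * g (dist (a j₁) (a j₂))) := by ring
  · simp

theorem mul_crossSum_le {f g : ℝ → ℝ} {c : ℝ} (hm : ∀ j, 0 ≤ m j) (hn : ∀ i, 0 ≤ n i)
    (h : ∀ j i, c * g (dist (a j) (b i)) ≤ f (dist (a j) (b i))) :
    c * crossSum g a b m n ≤ crossSum f a b m n := by
  rw [crossSum, crossSum, mul_sum]
  refine sum_le_sum fun j _ => ?_
  rw [mul_sum]
  refine sum_le_sum fun i _ => ?_
  calc c * (m j * n i * g (dist (a j) (b i)))
      = m j * n i * (c * g (dist (a j) (b i))) := by ring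
    _ ≤ m j * n i * f (dist (a j) (b i)) :=
        mul_le_mul_of_nonneg_left (h j i) (mul_nonneg (hm j) (hn i))

theorem crossSum_rpow_nonneg (hm : ∀ j, 0 ≤ m j) (hn : ∀ i, 0 ≤ n i) (p : ℝ) :
    0 ≤ crossSum (· ^ p) a b m n :=
  sum_nonneg fun j _ => sum_nonneg fun i _ =>
    mul_nonneg (mul_nonneg (hm j) (hn i)) (rpow_nonneg dist_nonneg p)

theorem two_mul_withinSum_one_le (hm : ∑ j, m j = 1) :
    2 * withinSum (fun _ => 1) a m ≤ 1 - 1 / s := by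
  have hsplit := two_mul_sum_sum_ite_lt (f := fun j₁ j₂ => m j₁ * m j₂) fun _ _ => mul_comm _ _
  simp only [← sum_mul_sum, hm, mul_one] at hsplit
  have hcs := sq_sum_le_card_mul_sum_sq (s := univ) (f := m)
  rw [hm, card_univ, Fintype.card_fin] at hcs
  simp only [withinSum, mul_one, hsplit, ← sq]
  rcases Nat.eq_zero_or_pos s with rfl | hs
  · simp at hm
  · have : 1 / (s : ℝ) ≤ ∑ j, m j ^ 2 := by
      rw [div_le_iff₀ (by exact_mod_cast hs)]; linarith
    linarith

end Sums

end Metric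

section Form

variable {X : Type*} [MetricSpace X] {ι κ : Type*} [Fintype ι] [Fintype κ]

noncomputable def negKerForm (q : ℝ) (x : ι → X) (η : ι → ℝ) : ℝ :=
  ∑ i, ∑ j, negKer q (x i) (x j) * η i * η j

theorem negKerForm_smul (q c : ℝ) (x : ι → X) (η : ι → ℝ) :
    negKerForm q x (c • η) = c ^ 2 * negKerForm q x η := by
  simp only [negKerForm, Pi.smul_apply, smul_eq_mul, mul_sum]
  exact sum_congr rfl fun i _ => sum_congr rfl fun j _ => by ring

theorem negKerForm_comp_of_injective (q : ℝ) (x : κ → X) {η : κ → ℝ} {e : ι → κ}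
    (he : Injective e) (hη : ∀ k ∉ Set.range e, η k = 0) :
    negKerForm q (x ∘ e) (η ∘ e) = negKerForm q x η := by
  refine Fintype.sum_of_injective e he _ _ (fun k hk => by simp [hη k hk]) fun i => ?_
  exact Fintype.sum_of_injective e he _ _ (fun k hk => by simp [hη k hk]) fun _ => rfl

theorem negKerForm_sumElim (q : ℝ) (x : ι → X) (y : κ → X) (η : ι → ℝ) (θ : κ → ℝ) :
    negKerForm q (Sum.elim x y) (Sum.elim η θ) = negKerForm q x η + negKerForm q y θ
      + 2 * ∑ i, ∑ j, negKer q (x i) (y j) * η i * θ j := by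
  have hswap : ∑ j, ∑ i, negKer q (y j) (x i) * θ j * η i
      = ∑ i, ∑ j, negKer q (x i) (y j) * η i * θ j := by
    rw [sum_comm]
    exact sum_congr rfl fun i _ => sum_congr rfl fun j _ => by rw [negKer_comm]; ring
  simp only [negKerForm, Fintype.sum_sum_type, Sum.elim_inl, Sum.elim_inr, sum_add_distrib]
  rw [hswap]
  ring

theorem negKerForm_eq_two_mul_withinSum (q : ℝ) {s : ℕ} {a : Fin s → X} (ha : Injective a)
    (m : Fin s → ℝ) : negKerForm q a m = 2 * withinSum (· ^ q) a m := by
  have hdiag : ∑ j, negKer q (a j) (a j) * m j * m j = 0 := by simp [negKer_self]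
  have hlt : withinSum (· ^ q) a m
      = ∑ j₁, ∑ j₂, if j₁ < j₂ then negKer q (a j₁) (a j₂) * m j₁ * m j₂ else 0 := by
    refine sum_congr rfl fun j₁ _ => sum_congr rfl fun j₂ _ => ?_
    split_ifs with h
    · rw [negKer_of_ne q (ha.ne h.ne)]; ring
    · rfl
  rw [hlt, two_mul_sum_sum_ite_lt fun j₁ j₂ => by rw [negKer_comm]; ring, hdiag, sub_zero]
  rfl

theorem negKerForm_sumElim_eq_neg_two_mul_simplexGap (q : ℝ) {s t : ℕ} {a : Fin s → X}
    {b : Fin t → X} {m : Fin s → ℝ} {n : Fin t → ℝ} (hS : IsNormSimplex a b m n) :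
    negKerForm q (Sum.elim a b) (Sum.elim m (-n)) = -2 * simplexGap q a b m n := by
  have hcross : ∑ j, ∑ i, negKer q (a j) (b i) * m j * (-n) i = -crossSum (· ^ q) a b m n := by
    simp only [crossSum, ← sum_neg_distrib]
    exact sum_congr rfl fun j _ => sum_congr rfl fun i _ => by
      rw [negKer_of_ne q (hS.disj j i), Pi.neg_apply]; ring
  have hneg : negKerForm q b (-n) = negKerForm q b n := by
    simpa using negKerForm_smul q (-1) b n
  rw [negKerForm_sumElim, hcross, hneg, negKerForm_eq_two_mul_withinSum q hS.inj_a,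
    negKerForm_eq_two_mul_withinSum q hS.inj_b, simplexGap_eq]
  ring

end Form

section Extraction

variable {X : Type*} [MetricSpace X] {ι : Type*} [Fintype ι]

theorem sum_filter_pos_eq_half_sum_abs {η : ι → ℝ} (hsum : ∑ i, η i = 0) :
    ∑ i with 0 < η i, η i = (∑ i, |η i|) / 2 ∧
      ∑ i with η i < 0, η i = -(∑ i, |η i|) / 2 := by
  have hparts : ∀ i, η i = (if 0 < η i then η i else 0) + (if η i < 0 then η i else 0)
      ∧ |η i| = (if 0 < η i then η i else 0) - (if η i < 0 then η i else 0) := by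
    intro i
    rcases lt_trichotomy (η i) 0 with h | h | h
    · simp [h, h.not_gt, abs_of_neg h]
    · simp [h]
    · simp [h, h.not_gt, abs_of_pos h]
  have hη : ∑ i, η i = ∑ i with 0 < η i, η i + ∑ i with η i < 0, η i := by
    rw [sum_filter, sum_filter, ← sum_add_distrib]
    exact sum_congr rfl fun i _ => (hparts i).1
  have habs : ∑ i, |η i| = ∑ i with 0 < η i, η i - ∑ i with η i < 0, η i := by
    rw [sum_filter, sum_filter, ← sum_sub_distrib]
    exact sum_congr rfl fun i _ => (hparts i).2
  constructor <;> linarith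

theorem exists_isNormSimplex_negKerForm_eq {x : ι → X} (hx : Injective x) {η : ι → ℝ}
    (hsum : ∑ i, η i = 0) (hη : η ≠ 0) :
    ∃ (s t : ℕ) (a : Fin s → X) (b : Fin t → X) (m : Fin s → ℝ) (n : Fin t → ℝ) (α : ℝ),
      IsNormSimplex a b m n ∧ α ≠ 0 ∧
        ∀ q, negKerForm q x η = -2 * α ^ 2 * simplexGap q a b m n := by
  classical
  obtain ⟨hP, hN⟩ := sum_filter_pos_eq_half_sum_abs hsum
  set P := univ.filter (0 < η ·)
  set N := univ.filter (η · < 0)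
  set α := ∑ i ∈ P, η i
  have hα : 0 < α := by
    have : 0 < ∑ i, |η i| := by
      obtain ⟨i, hi⟩ := Function.ne_iff.1 hη
      exact sum_pos' (fun i _ => abs_nonneg _) ⟨i, mem_univ _, abs_pos.2 hi⟩
    linarith
  set e : Fin #P ⊕ Fin #N → ι :=
    Sum.elim (fun j => (P.equivFin.symm j : ι)) (fun j => (N.equivFin.symm j : ι))
  have he : Injective e := by
    refine (Subtype.val_injective.comp P.equivFin.symm.injective).sumElim
      (Subtype.val_injective.comp N.equivFin.symm.injective) fun j j' h => ?_
    have hpos := (mem_filter.1 (P.equivFin.symm j).2).2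
    have hneg := (mem_filter.1 (N.equivFin.symm j').2).2
    simp only [comp_apply] at h
    rw [h] at hpos
    exact hpos.not_gt hneg
  have hoff : ∀ i ∉ Set.range e, η i = 0 := by
    intro i hi
    by_contra h
    rcases lt_or_gt_of_ne h with h | h
    · exact hi ⟨Sum.inr (N.equivFin ⟨i, mem_filter.2 ⟨mem_univ _, h⟩⟩), by simp [e]⟩
    · exact hi ⟨Sum.inl (P.equivFin ⟨i, mem_filter.2 ⟨mem_univ _, h⟩⟩), by simp [e]⟩
  set a := x ∘ e ∘ Sum.inl
  set b := x ∘ e ∘ Sum.inr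
  set m := fun j => η (e (Sum.inl j)) / α
  set n := fun j => -η (e (Sum.inr j)) / α
  have hreindex : ∀ (S : Finset ι) (f : ι → ℝ), ∑ j, f (S.equivFin.symm j) = ∑ i ∈ S, f i :=
    fun S f => (S.equivFin.symm.sum_comp (f ·)).trans (S.sum_coe_sort f)
  have hS : IsNormSimplex a b m n :=
    { inj_a := hx.comp (he.comp Sum.inl_injective)
      inj_b := hx.comp (he.comp Sum.inr_injective)
      disj := fun j i h => Sum.inl_ne_inr (he (hx h))
      m_pos := fun j => div_pos (mem_filter.1 (P.equivFin.symm j).2).2 hα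
      n_pos := fun i => div_pos (neg_pos.2 (mem_filter.1 (N.equivFin.symm i).2).2) hα
      m_sum := by
        rw [← sum_div, div_eq_one_iff_eq hα.ne']
        exact hreindex P η
      n_sum := by
        rw [← sum_div, div_eq_one_iff_eq hα.ne']
        exact (hreindex N (-η ·)).trans (by rw [sum_neg_distrib]; linarith) }
  have hxe : x ∘ e = Sum.elim a b := by ext (j | j) <;> rfl
  have hηe : η ∘ e = α • Sum.elim m (-n) := by
    ext (j | j) <;>
      simp only [comp_apply, Pi.smul_apply, Sum.elim_inl, Sum.elim_inr, Pi.neg_apply,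
        smul_eq_mul, m, n] <;>
      field_simp
  refine ⟨#P, #N, a, b, m, n, α, hS, hα.ne', fun q => ?_⟩
  rw [← negKerForm_comp_of_injective q x he hoff, hxe, hηe, negKerForm_smul,
    negKerForm_sumElim_eq_neg_two_mul_simplexGap q hS]
  ring

end Extraction

section Gap

variable {X : Type*} [MetricSpace X]

theorem hasNegType_of_simplexGap_nonneg {q : ℝ}
    (h : ∀ (s t : ℕ) (a : Fin s → X) (b : Fin t → X) (m : Fin s → ℝ) (n : Fin t → ℝ),
      IsNormSimplex a b m n → 0 ≤ simplexGap q a b m n) :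
    HasNegType X q := by
  intro k _ x hx η hsum
  change negKerForm q x η ≤ 0
  by_cases hη : η = 0
  · simp [negKerForm, hη]
  obtain ⟨s, t, a, b, m, n, α, hS, -, hform⟩ := exists_isNormSimplex_negKerForm_eq hx hsum hη
  rw [hform]
  exact mul_nonpos_of_nonpos_of_nonneg (by nlinarith [sq_nonneg α]) (h s t a b m n hS)

theorem hasStrictNegType_of_simplexGap_pos {q : ℝ}
    (h : ∀ (s t : ℕ) (a : Fin s → X) (b : Fin t → X) (m : Fin s → ℝ) (n : Fin t → ℝ),
      IsNormSimplex a b m n → 0 < simplexGap q a b m n) :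
    HasStrictNegType X q := by
  refine ⟨hasNegType_of_simplexGap_nonneg fun s t a b m n hS => (h s t a b m n hS).le, ?_⟩
  intro k _ x hx η hsum hη
  obtain ⟨s, t, a, b, m, n, α, hS, hα, hform⟩ := exists_isNormSimplex_negKerForm_eq hx hsum hη
  change negKerForm q x η < 0
  rw [hform]
  exact mul_neg_of_neg_of_pos (by nlinarith [sq_pos_of_ne_zero hα]) (h s t a b m n hS)

variable {s t : ℕ} {a : Fin s → X} {b : Fin t → X} {m : Fin s → ℝ} {n : Fin t → ℝ}

theorem IsNormSimplex.pos_left (hS : IsNormSimplex a b m n) : 0 < s :=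
  Nat.pos_of_ne_zero fun h => by subst h; simpa using hS.m_sum

theorem IsNormSimplex.pos_right (hS : IsNormSimplex a b m n) : 0 < t :=
  Nat.pos_of_ne_zero fun h => by subst h; simpa using hS.n_sum

variable [Fintype X]

theorem IsNormSimplex.add_le_card (hS : IsNormSimplex a b m n) : s + t ≤ Fintype.card X := by
  simpa using Fintype.card_le_of_injective _ (hS.inj_a.sumElim hS.inj_b hS.disj)

theorem withinSum_add_withinSum_le {p : ℝ} (hp : 0 ≤ p) (hS : IsNormSimplex a b m n) :
    withinSum (· ^ p) a m + withinSum (· ^ p) b n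
      ≤ Metric.diam (Set.univ : Set X) ^ p * gammaFn (Fintype.card X) := by
  set Δ := Metric.diam (Set.univ : Set X)
  have hdist : ∀ x y : X, dist x y ^ p ≤ Δ ^ p * 1 := fun x y => by
    rw [mul_one]; exact rpow_le_rpow dist_nonneg (dist_le_diam_univ x y) hp
  have ha := withinSum_le_mul (f := (· ^ p)) (a := a) (g := fun _ => 1)
    (fun j => (hS.m_pos j).le) fun _ _ _ => hdist _ _
  have hb := withinSum_le_mul (f := (· ^ p)) (a := b) (g := fun _ => 1)
    (fun i => (hS.n_pos i).le) fun _ _ _ => hdist _ _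
  have hwa := two_mul_withinSum_one_le (a := a) hS.m_sum
  have hwb := two_mul_withinSum_one_le (a := b) hS.n_sum
  have hγ := le_gammaFn_of_add_le hS.pos_left hS.pos_right hS.add_le_card
  calc _ ≤ Δ ^ p * (withinSum (fun _ => 1) a m + withinSum (fun _ => 1) b n) := by
        rw [mul_add]; exact add_le_add ha hb
    _ ≤ Δ ^ p * gammaFn (Fintype.card X) :=
        mul_le_mul_of_nonneg_left (by linarith) (rpow_nonneg Metric.diam_nonneg p)

theorem negTypeGap_le_simplexGap {p : ℝ} (hp : 0 ≤ p) (hS : IsNormSimplex a b m n) :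
    negTypeGap X p ≤ simplexGap p a b m n := by
  refine csInf_le ⟨-(Metric.diam (Set.univ : Set X) ^ p * gammaFn (Fintype.card X)), ?_⟩
    ⟨s, t, a, b, m, n, hS, rfl⟩
  rintro _ ⟨s', t', a', b', m', n', hS', rfl⟩
  have := withinSum_add_withinSum_le hp hS'
  have := crossSum_rpow_nonneg (a := a') (b := b') (fun j => (hS'.m_pos j).le)
    (fun i => (hS'.n_pos i).le) p
  rw [simplexGap_eq]
  linarith

theorem le_simplexGap_add {p ε : ℝ} (hp : 0 ≤ p) (hε : 0 ≤ ε) (hS : IsNormSimplex a b m n) :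
    minSep X ^ ε * (negTypeGap X p - (scaledDiam X ^ ε - 1)
        * (Metric.diam (Set.univ : Set X) ^ p * gammaFn (Fintype.card X)))
      ≤ simplexGap (p + ε) a b m n := by
  set δ := minSep X
  set Δ := Metric.diam (Set.univ : Set X)
  have hab := hS.disj ⟨0, hS.pos_left⟩ ⟨0, hS.pos_right⟩
  have hδ : 0 < δ := minSep_pos hab
  have hδΔ : δ ≤ Δ := (minSep_le_dist hab).trans (dist_le_diam_univ _ _)
  have hΔε : scaledDiam X ^ ε * δ ^ ε = Δ ^ ε := by
    rw [scaledDiam, div_rpow (hδ.le.trans hδΔ) hδ.le, div_mul_cancel₀ _ (rpow_pos_of_pos hδ ε).ne']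
  have hcross : δ ^ ε * crossSum (· ^ p) a b m n ≤ crossSum (· ^ (p + ε)) a b m n :=
    mul_crossSum_le (fun j => (hS.m_pos j).le) (fun i => (hS.n_pos i).le) fun j i => by
      have hd := minSep_le_dist (hS.disj j i)
      rw [rpow_add (hδ.trans_le hd), mul_comm]
      exact mul_le_mul_of_nonneg_left (rpow_le_rpow hδ.le hd hε) (rpow_nonneg dist_nonneg p)
  have hwithin : ∀ {r : ℕ} {c : Fin r → X} {w : Fin r → ℝ}, Injective c → (∀ j, 0 ≤ w j) →
      withinSum (· ^ (p + ε)) c w ≤ Δ ^ ε * withinSum (· ^ p) c w :=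
    fun hc hw => withinSum_le_mul hw fun j₁ j₂ h => by
      have hd : 0 < dist _ _ := dist_pos.2 (hc.ne h.ne)
      rw [rpow_add hd, mul_comm]
      exact mul_le_mul_of_nonneg_right (rpow_le_rpow hd.le (dist_le_diam_univ _ _) hε)
        (rpow_nonneg hd.le p)
  have ha := hwithin hS.inj_a fun j => (hS.m_pos j).le
  have hb := hwithin hS.inj_b fun i => (hS.n_pos i).le
  have hgap := mul_le_mul_of_nonneg_left (negTypeGap_le_simplexGap hp hS)
    (rpow_nonneg hδ.le ε)
  have hsum := mul_le_mul_of_nonneg_left (withinSum_add_withinSum_le hp hS)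
    (sub_nonneg.2 (rpow_le_rpow hδ.le hδΔ hε))
  rw [simplexGap_eq] at hgap ⊢
  linear_combination hcross + ha + hb + hgap + hsum
    - (Δ ^ p * gammaFn (Fintype.card X)) * hΔε

end Gap

theorem rpow_sub_one_mul_le_of_le_log_div_log {D K Γ ε : ℝ} (hD : 1 < D) (hK : 0 < K)
    (hy : 0 < 1 + Γ / K) (hε : ε ≤ log (1 + Γ / K) / log D) : (D ^ ε - 1) * K ≤ Γ := by
  rw [← le_div_iff₀ hK, sub_le_iff_le_add', rpow_le_iff_le_log (by linarith) hy]
  exact (le_div_iff₀ (log_pos hD)).1 hε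

theorem rpow_sub_one_mul_lt_of_lt_log_div_log {D K Γ ε : ℝ} (hD : 1 < D) (hK : 0 < K)
    (hy : 0 < 1 + Γ / K) (hε : ε < log (1 + Γ / K) / log D) : (D ^ ε - 1) * K < Γ := by
  rw [← lt_div_iff₀ hK, sub_lt_iff_lt_add', rpow_lt_iff_lt_log (by linarith) hy]
  exact (lt_div_iff₀ (log_pos hD)).1 hε

/-- Quantitative lower bound on supremal strict negative type: if `|X| = n ≥ 3`,
the metric is not a multiple of the discrete metric (`𝔇_X > 1`) and `Γ_X^p > 0`,
then with `ζ = ln(1 + Γ_X^p/((diam X)^p γ(n)))/ln 𝔇_X`, the space has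
`q`-negative type for all `q ∈ [p, p+ζ]` and strict `q`-negative type for all
`q ∈ [p, p+ζ)`. -/
theorem negType_interval_of_gap_pos {X : Type*} [MetricSpace X] [Fintype X]
    (hcard : 3 ≤ Fintype.card X) (p : ℝ) (hp : 0 ≤ p)
    (hD : 1 < scaledDiam X)
    (hΓ : 0 < negTypeGap X p)
    (ζ : ℝ)
    (hζ : ζ = Real.log (1 + negTypeGap X p /
        (Metric.diam (Set.univ : Set X) ^ p * gammaFn (Fintype.card X))) /
      Real.log (scaledDiam X)) :
    (∀ q : ℝ, p ≤ q → q ≤ p + ζ → HasNegType X q) ∧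
    (∀ q : ℝ, p ≤ q → q < p + ζ → HasStrictNegType X q) := by
  obtain ⟨x, y, hxy⟩ := Fintype.exists_pair_of_one_lt_card (by omega : 1 < Fintype.card X)
  have hK : 0 < Metric.diam (Set.univ : Set X) ^ p * gammaFn (Fintype.card X) :=
    mul_pos (rpow_pos_of_pos ((dist_pos.2 hxy).trans_le (dist_le_diam_univ x y)) p)
      (gammaFn_pos hcard)
  have hy : 0 < 1 + negTypeGap X p /
      (Metric.diam (Set.univ : Set X) ^ p * gammaFn (Fintype.card X)) := by positivity
  have hgap : ∀ q, p ≤ q → ∀ (s t : ℕ) (a : Fin s → X) (b : Fin t → X) (m : Fin s → ℝ)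
      (n : Fin t → ℝ), IsNormSimplex a b m n →
      minSep X ^ (q - p) * (negTypeGap X p - (scaledDiam X ^ (q - p) - 1)
        * (Metric.diam (Set.univ : Set X) ^ p * gammaFn (Fintype.card X)))
        ≤ simplexGap q a b m n := fun q hq s t a b m n hS => by
    simpa using le_simplexGap_add hp (sub_nonneg.2 hq) hS
  refine ⟨fun q hpq hqζ => hasNegType_of_simplexGap_nonneg fun s t a b m n hS => ?_,
    fun q hpq hqζ => hasStrictNegType_of_simplexGap_pos fun s t a b m n hS => ?_⟩
  · have h := rpow_sub_one_mul_le_of_le_log_div_log (ε := q - p) hD hK hy (by linarith)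
    exact (mul_nonneg (rpow_nonneg (minSep_pos hxy).le _) (sub_nonneg.2 h)).trans
      (hgap q hpq s t a b m n hS)
  · have h := rpow_sub_one_mul_lt_of_lt_log_div_log (ε := q - p) hD hK hy (by linarith)
    exact (mul_pos (rpow_pos_of_pos (minSep_pos hxy) _) (sub_pos.2 h)).trans_le
      (hgap q hpq s t a b m n hS)
end

section
/- Let p ≥ 0 and let (X,d) be a finite metric space. If (X,d) has strict p-negative type, then there exists ζ > 0 such that (X,d) has strict q-negative type for all q ∈ [p, p+ζ). -/
open scoped BigOperators

/-!
For `y ≠ z` the kernel `q ↦ d(y,z)^q` is continuous, so on a finite space the quadratic form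
`η ↦ ∑ d(y,z)^q η_y η_z` depends continuously on `(q, η)`. By homogeneity, strict `q`-negative
type says that this form is negative on the compact set of unit vectors with coordinate sum
zero; negativity on a compact set at `q = p` persists for all `q` near `p`.
-/

open Filter Topology Metric Function

def sumZeroSphere (X : Type*) [Fintype X] : Set (X → ℝ) :=
  sphere 0 1 ∩ {η | ∑ y, η y = 0}

lemma isCompact_sumZeroSphere {X : Type*} [Fintype X] : IsCompact (sumZeroSphere X) :=
  (isCompact_sphere 0 1).inter_right (isClosed_eq (by fun_prop) continuous_const)

section

variable {X : Type*} [MetricSpace X]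

@[fun_prop]
lemma continuous_negKer (x y : X) : Continuous fun p : ℝ => negKer p x y := by
  by_cases hxy : x = y
  · simpa [negKer, hxy] using continuous_const
  · simpa [negKer, hxy] using Real.continuous_const_rpow (dist_ne_zero.2 hxy)

variable [Fintype X]

noncomputable def negTypeForm (p : ℝ) (η : X → ℝ) : ℝ :=
  ∑ y, ∑ z, negKer p y z * η y * η z

lemma negTypeForm_smul (p c : ℝ) (η : X → ℝ) :
    negTypeForm p (c • η) = c ^ 2 * negTypeForm p η := by
  simp only [negTypeForm, Finset.mul_sum, Pi.smul_apply, smul_eq_mul]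
  exact Finset.sum_congr rfl fun _ _ => Finset.sum_congr rfl fun _ _ => by ring

lemma continuous_negTypeForm :
    Continuous fun pη : ℝ × (X → ℝ) => negTypeForm pη.1 pη.2 := by
  unfold negTypeForm
  fun_prop

lemma sum_negKer_eq_negTypeForm {k : ℕ} {x : Fin k → X} (hx : Injective x) (p : ℝ)
    {η : X → ℝ} (hη : ∀ y ∉ Set.range x, η y = 0) :
    ∑ i, ∑ j, negKer p (x i) (x j) * η (x i) * η (x j) = negTypeForm p η :=
  Fintype.sum_of_injective x hx _ _ (fun y hy => Finset.sum_eq_zero fun z _ => by simp [hη y hy])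
    fun i => Fintype.sum_of_injective x hx _ _ (fun z hz => by simp [hη z hz]) fun _ => rfl

lemma hasStrictNegType_iff_negTypeForm_neg (p : ℝ) :
    HasStrictNegType X p ↔ ∀ η : X → ℝ, ∑ y, η y = 0 → η ≠ 0 → negTypeForm p η < 0 := by
  constructor
  · intro h η hsum hη
    obtain ⟨y, hy⟩ := ne_iff.1 hη
    have hcard : 2 ≤ Fintype.card X := by
      by_contra! hlt
      have := Fintype.card_le_one_iff_subsingleton.1 (Nat.le_of_lt_succ hlt)
      exact hy (by simpa [Fintype.sum_subsingleton _ y] using hsum)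
    let e := (Fintype.equivFin X).symm
    rw [← sum_negKer_eq_negTypeForm e.injective p (by simp)]
    refine h.2 _ hcard e e.injective (η ∘ e) (by simpa [e.sum_comp] using hsum) fun h0 => hy ?_
    simpa [e] using congrFun h0 (e.symm y)
  · intro h
    have strict : ∀ k, 2 ≤ k → ∀ x : Fin k → X, Injective x → ∀ η : Fin k → ℝ,
        ∑ i, η i = 0 → η ≠ 0 → ∑ i, ∑ j, negKer p (x i) (x j) * η i * η j < 0 := by
      intro k _ x hx η hsum hη
      set η' := extend x η (0 : X → ℝ)
      have hη'x : ∀ i, η' (x i) = η i := hx.extend_apply η 0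
      have hη'0 : ∀ y ∉ Set.range x, η' y = 0 := fun y hy => extend_apply' η (0 : X → ℝ) y hy
      simp only [← hη'x, sum_negKer_eq_negTypeForm hx p hη'0]
      refine h η' ?_ fun h0 => hη (funext fun i => by simpa [hη'x] using congrFun h0 (x i))
      rw [← Fintype.sum_of_injective x hx η η' hη'0 fun i => (hη'x i).symm, hsum]
    refine ⟨fun k hk x hx η hsum => ?_, strict⟩
    by_cases hη : η = 0
    · simp [hη]
    · exact (strict k hk x hx η hsum hη).le

lemma hasStrictNegType_iff_negTypeForm_neg_on_sumZeroSphere (p : ℝ) :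
    HasStrictNegType X p ↔ ∀ η ∈ sumZeroSphere X, negTypeForm p η < 0 := by
  rw [hasStrictNegType_iff_negTypeForm_neg]
  constructor
  · rintro h η ⟨hη1, hsum⟩
    exact h η hsum fun h0 => by simp [h0] at hη1
  · intro h η hsum hη
    have hnorm : 0 < ‖η‖ := norm_pos_iff.2 hη
    have hunit : ‖η‖⁻¹ • η ∈ sumZeroSphere X :=
      ⟨by simpa using norm_smul_inv_norm (𝕜 := ℝ) hη, by simp [← Finset.mul_sum, hsum]⟩
    have hrescale : η = ‖η‖ • ‖η‖⁻¹ • η := by rw [smul_inv_smul₀ hnorm.ne']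
    rw [hrescale, negTypeForm_smul]
    exact mul_neg_of_pos_of_neg (by positivity) (h _ hunit)

end

theorem strictNegType_interval_general {X : Type*} [MetricSpace X] [Fintype X]
    (p : ℝ) (h : HasStrictNegType X p) :
    ∃ ζ : ℝ, 0 < ζ ∧ ∀ q : ℝ, p ≤ q → q < p + ζ → HasStrictNegType X q := by
  simp only [hasStrictNegType_iff_negTypeForm_neg_on_sumZeroSphere] at h ⊢
  have hnear : ∀ᶠ q in 𝓝 p, ∀ η ∈ sumZeroSphere X, negTypeForm q η < 0 :=
    isCompact_sumZeroSphere.eventually_forall_of_forall_eventually fun η hη =>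
      continuous_negTypeForm.continuousAt.eventually_lt continuousAt_const (h η hη)
  obtain ⟨ζ, hζ, hball⟩ := Metric.eventually_nhds_iff.1 hnear
  refine ⟨ζ, hζ, fun q hpq hq => hball ?_⟩
  rw [Real.dist_eq, abs_lt]
  constructor <;> linarith

/-- If a finite metric space has strict `p`-negative type, then it has strict
`q`-negative type for all `q` in some interval `[p, p+ζ)` with `ζ > 0`. -/
theorem strictNegType_interval {X : Type*} [MetricSpace X] [Fintype X]
    (p : ℝ) (hp : 0 ≤ p) (h : HasStrictNegType X p) :
    ∃ ζ : ℝ, 0 < ζ ∧ ∀ q : ℝ, p ≤ q → q < p + ζ → HasStrictNegType X q :=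
  strictNegType_interval_general p h
end
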